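/- Let m > 0, γ ∈ ℝ, ζ ∈ ℝ², and let M_a = [[m^#, μ^t],[μ, M^♭]] be a symmetric positive semidefinite 3×3 matrix with M^♭ the lower-right 2×2 block. Define for θ ∈ ℝ: μ_θ = R(θ)μ, M^♭_θ = R(θ) M^♭ R(θ)^t, M^†_θ = R(θ) M^† R(θ)^t with M^† = (1/2)(M^♭ J − J M^♭). Then for every p = (ω,ℓ), ⟨Γ_θ, p, p⟩ := −(0, P_a) × p − ω M_{a,θ}(0, ℓ^⊥), where M_{a,θ} = 𝓡(θ) M_a 𝓡(θ)^t with 𝓡(θ) = diag(1, R(θ)), and P_a denotes the last two components of M_{a,θ} p, equals the vector (−ℓ^⊥ · M^†_θ ℓ^⊥, ω² μ_θ^⊥ − 2ω M^†_θ ℓ). -/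

import Mathlib

/-!
Conjugation by `𝓡(θ)` acts on `M_a` blockwise, sending `μ` to `R(θ)μ` and `M^♭` to
`R(θ) M^♭ R(θ)ᵗ`, and since `R(θ)` commutes with `J` the map `M^♭ ↦ M^†` is equivariant under
this conjugation. This reduces the identity to `θ = 0`, where it is a direct computation with
`(ω_a, ℓ_a) × (ω_b, ℓ_b) = (ℓ_a^⊥ · ℓ_b, ω_a ℓ_b^⊥ − ω_b ℓ_a^⊥)`, in which the symmetry of
`M^♭` gives `ℓ^⊥ · M^† ℓ^⊥ = −M^♭ℓ · ℓ^⊥`.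
-/

open Matrix Real

/-- Rotation matrix of angle θ. -/
noncomputable def Rot (θ : ℝ) : Matrix (Fin 2) (Fin 2) ℝ :=
  !![Real.cos θ, -Real.sin θ; Real.sin θ, Real.cos θ]

/-- The block rotation `𝓡(θ) = diag(1, R(θ)) ∈ SO(3)`. -/
noncomputable def bigRot (θ : ℝ) : Matrix (Fin 3) (Fin 3) ℝ :=
  !![1, 0, 0; 0, Real.cos θ, -Real.sin θ; 0, Real.sin θ, Real.cos θ]

/-- The rotation by π/2: `J x = x^⊥`. -/
noncomputable def Jrot : Matrix (Fin 2) (Fin 2) ℝ := !![0, -1; 1, 0]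

/-- Planar perpendicular: `(x₁,x₂)^⊥ = (−x₂,x₁)`. -/
def perp2 (x : Fin 2 → ℝ) : Fin 2 → ℝ := ![-(x 1), x 0]

/-- Identify `(ω, ℓ) ∈ ℝ × ℝ²` with a vector of ℝ³. -/
def toR3 (ω : ℝ) (ℓ : Fin 2 → ℝ) : Fin 3 → ℝ := ![ω, ℓ 0, ℓ 1]

/-- `M^† = (1/2)(M^♭ J − J M^♭)`. -/
noncomputable def Mdagger (Mflat : Matrix (Fin 2) (Fin 2) ℝ) : Matrix (Fin 2) (Fin 2) ℝ :=
  (1 / 2 : ℝ) • (Mflat * Jrot - Jrot * Mflat)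

theorem Matrix.IsSymm.mul_mul_transpose {n α : Type*} [Fintype n] [CommSemiring α]
    {N : Matrix n n α} (hN : N.IsSymm) (A : Matrix n n α) : (A * N * Aᵀ).IsSymm := by
  simp [IsSymm, transpose_mul, hN.eq, Matrix.mul_assoc]

theorem Jrot_mulVec (x : Fin 2 → ℝ) : Jrot *ᵥ x = perp2 x := by
  ext i; fin_cases i <;> simp [Jrot, perp2, mulVec, dotProduct, Fin.sum_univ_two]

theorem perp2_dotProduct (x y : Fin 2 → ℝ) : perp2 x ⬝ᵥ y = -(x ⬝ᵥ perp2 y) := by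
  simp [perp2, dotProduct, Fin.sum_univ_two]

theorem Rot_transpose (θ : ℝ) : (Rot θ)ᵀ = Rot (-θ) := by
  ext i j; fin_cases i <;> fin_cases j <;> simp [Rot]

theorem Rot_mul_Jrot (θ : ℝ) : Rot θ * Jrot = Jrot * Rot θ := by
  ext i j; fin_cases i <;> fin_cases j <;> simp [Rot, Jrot]

theorem Mdagger_mulVec (N : Matrix (Fin 2) (Fin 2) ℝ) (x : Fin 2 → ℝ) :
    Mdagger N *ᵥ x = (1 / 2 : ℝ) • (N *ᵥ perp2 x - perp2 (N *ᵥ x)) := by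
  rw [Mdagger, smul_mulVec, sub_mulVec, ← mulVec_mulVec, ← mulVec_mulVec, Jrot_mulVec,
    Jrot_mulVec]

theorem perp2_dotProduct_Mdagger_mulVec_perp2 {N : Matrix (Fin 2) (Fin 2) ℝ} (hN : N.IsSymm)
    (x : Fin 2 → ℝ) : perp2 x ⬝ᵥ Mdagger N *ᵥ perp2 x = -(N *ᵥ x ⬝ᵥ perp2 x) := by
  have h10 : N 1 0 = N 0 1 := hN.apply 0 1
  rw [Mdagger_mulVec]
  simp [perp2, mulVec, dotProduct, Fin.sum_univ_two, h10]
  ring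

theorem Rot_mul_Mdagger_mul_transpose (θ : ℝ) (N : Matrix (Fin 2) (Fin 2) ℝ) :
    Rot θ * Mdagger N * (Rot θ)ᵀ = Mdagger (Rot θ * N * (Rot θ)ᵀ) := by
  simp only [Mdagger, Matrix.mul_smul, Matrix.smul_mul, Matrix.mul_sub, Matrix.sub_mul,
    Matrix.mul_assoc, Rot_transpose, Rot_mul_Jrot]
  simp only [← Matrix.mul_assoc, Rot_mul_Jrot]

theorem vecCons_toR3 (a : ℝ) (x : Fin 2 → ℝ) : ![toR3 a x 1, toR3 a x 2] = x := by
  ext i; fin_cases i <;> rfl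

theorem neg_toR3_sub_smul_toR3 (a b c : ℝ) (x y : Fin 2 → ℝ) :
    -toR3 a x - c • toR3 b y = toR3 (-a - c * b) (-x - c • y) := by
  ext i; fin_cases i <;> simp [toR3]

theorem crossProduct_toR3 (a b : ℝ) (x y : Fin 2 → ℝ) :
    crossProduct (toR3 a x) (toR3 b y) = toR3 (perp2 x ⬝ᵥ y) (a • perp2 y - b • perp2 x) := by
  ext i; fin_cases i <;>
    simp [crossProduct, toR3, perp2, dotProduct, Fin.sum_univ_succ] <;> ring

def borderedMatrix (a : ℝ) (μ : Fin 2 → ℝ) (N : Matrix (Fin 2) (Fin 2) ℝ) :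
    Matrix (Fin 3) (Fin 3) ℝ :=
  !![a, μ 0, μ 1; μ 0, N 0 0, N 0 1; μ 1, N 1 0, N 1 1]

theorem borderedMatrix_mulVec_toR3 (a ω : ℝ) (μ ℓ : Fin 2 → ℝ) (N : Matrix (Fin 2) (Fin 2) ℝ) :
    borderedMatrix a μ N *ᵥ toR3 ω ℓ = toR3 (a * ω + μ ⬝ᵥ ℓ) (ω • μ + N *ᵥ ℓ) := by
  ext i; fin_cases i <;>
    simp [borderedMatrix, toR3, mulVec, dotProduct, Fin.sum_univ_succ] <;> ring

theorem bigRot_mul_borderedMatrix_mul_transpose (θ a : ℝ) (μ : Fin 2 → ℝ)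
    (N : Matrix (Fin 2) (Fin 2) ℝ) :
    bigRot θ * borderedMatrix a μ N * (bigRot θ)ᵀ
      = borderedMatrix a (Rot θ *ᵥ μ) (Rot θ * N * (Rot θ)ᵀ) := by
  ext i j; fin_cases i <;> fin_cases j <;>
    simp [bigRot, borderedMatrix, Rot, mulVec, vecMul, dotProduct, Matrix.mul_apply,
      Fin.sum_univ_succ] <;> ring

theorem christoffel_borderedMatrix (a ω : ℝ) (μ ℓ : Fin 2 → ℝ) {N : Matrix (Fin 2) (Fin 2) ℝ}
    (hN : N.IsSymm) :
    -crossProduct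
        (toR3 0 ![(borderedMatrix a μ N *ᵥ toR3 ω ℓ) 1, (borderedMatrix a μ N *ᵥ toR3 ω ℓ) 2])
        (toR3 ω ℓ) - ω • borderedMatrix a μ N *ᵥ toR3 0 (perp2 ℓ)
      = toR3 (-(perp2 ℓ ⬝ᵥ Mdagger N *ᵥ perp2 ℓ))
          (fun i => ω ^ 2 * perp2 μ i - 2 * ω * (Mdagger N *ᵥ ℓ) i) := by
  rw [borderedMatrix_mulVec_toR3, borderedMatrix_mulVec_toR3, vecCons_toR3, crossProduct_toR3,
    neg_toR3_sub_smul_toR3]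
  congr 1
  · rw [perp2_dotProduct_Mdagger_mulVec_perp2 hN, perp2_dotProduct, add_dotProduct,
      smul_dotProduct, smul_eq_mul]
    ring
  · ext i
    rw [Mdagger_mulVec]
    fin_cases i <;> simp [perp2] <;> ring

theorem christoffel_explicit_general
    (msharp : ℝ) (μ : Fin 2 → ℝ) (Mflat : Matrix (Fin 2) (Fin 2) ℝ)
    (hflat : Mflat.IsSymm)
    (Ma : Matrix (Fin 3) (Fin 3) ℝ)
    (hMa : Ma = !![msharp, μ 0, μ 1;
                   μ 0, Mflat 0 0, Mflat 0 1;
                   μ 1, Mflat 1 0, Mflat 1 1])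
    (θ ω : ℝ) (ℓ : Fin 2 → ℝ) :
    (-(crossProduct (toR3 0 ![((bigRot θ * Ma * (bigRot θ)ᵀ).mulVec (toR3 ω ℓ)) 1,
                              ((bigRot θ * Ma * (bigRot θ)ᵀ).mulVec (toR3 ω ℓ)) 2])
          (toR3 ω ℓ) : Fin 3 → ℝ)
        - ω • (bigRot θ * Ma * (bigRot θ)ᵀ).mulVec (toR3 0 (perp2 ℓ)))
      = toR3 (-(perp2 ℓ ⬝ᵥ (Rot θ * Mdagger Mflat * (Rot θ)ᵀ).mulVec (perp2 ℓ)))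
          (fun i => ω ^ 2 * perp2 ((Rot θ).mulVec μ) i
            - 2 * ω * ((Rot θ * Mdagger Mflat * (Rot θ)ᵀ).mulVec ℓ) i) := by
  rw [show Ma = borderedMatrix msharp μ Mflat from hMa, bigRot_mul_borderedMatrix_mul_transpose,
    Rot_mul_Mdagger_mul_transpose]
  exact christoffel_borderedMatrix msharp ω _ ℓ (hflat.mul_mul_transpose (Rot θ))

/-- Explicit form of the Christoffel term
`⟨Γ_θ, p, p⟩ = −(0, P_a) × p − ω M_{a,θ}(0, ℓ^⊥)` for the added inertia
`M_a = [[m^#, μᵗ],[μ, M^♭]]`: it equals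
`(−ℓ^⊥ · M^†_θ ℓ^⊥, ω² μ_θ^⊥ − 2ω M^†_θ ℓ)`. -/
theorem christoffel_explicit (m γ : ℝ) (hm : 0 < m) (ζ : Fin 2 → ℝ)
    (msharp : ℝ) (μ : Fin 2 → ℝ) (Mflat : Matrix (Fin 2) (Fin 2) ℝ)
    (hflat : Mflat.IsSymm)
    (Ma : Matrix (Fin 3) (Fin 3) ℝ)
    (hMa : Ma = !![msharp, μ 0, μ 1;
                   μ 0, Mflat 0 0, Mflat 0 1;
                   μ 1, Mflat 1 0, Mflat 1 1])
    (hpsd : Ma.PosSemidef)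
    (θ ω : ℝ) (ℓ : Fin 2 → ℝ) :
    (-(crossProduct (toR3 0 ![((bigRot θ * Ma * (bigRot θ)ᵀ).mulVec (toR3 ω ℓ)) 1,
                              ((bigRot θ * Ma * (bigRot θ)ᵀ).mulVec (toR3 ω ℓ)) 2])
          (toR3 ω ℓ) : Fin 3 → ℝ)
        - ω • (bigRot θ * Ma * (bigRot θ)ᵀ).mulVec (toR3 0 (perp2 ℓ)))
      = toR3 (-(perp2 ℓ ⬝ᵥ (Rot θ * Mdagger Mflat * (Rot θ)ᵀ).mulVec (perp2 ℓ)))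
          (fun i => ω ^ 2 * perp2 ((Rot θ).mulVec μ) i
            - 2 * ω * ((Rot θ * Mdagger Mflat * (Rot θ)ᵀ).mulVec ℓ) i) :=
  christoffel_explicit_general msharp μ Mflat hflat Ma hMa θ ω ℓ
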